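/- arXiv:1403.0632 — 7 statements merged into one kernel-verified Lean document; each statement's English description precedes it below -/
import Mathlib

section
/- If (f_n) and (g_n) are frames in a separable Hilbert space H that are dual to each other (i.e. their analysis operators U, V satisfy V*U = I), then dim(Ker U*) = dim(Ker V*); that is, dual frames have the same excess. -/
open scoped InnerProductSpace

noncomputable section

/-- The sequence space ℓ² over ℂ indexed by ℕ. -/
abbrev ell2 : Type := lp (fun _ : ℕ => ℂ) 2

/-- `f` is a frame for `H`: there are frame bounds `0 < A ≤ B`. -/
def IsFrame {H : Type*} [NormedAddCommGroup H] [InnerProductSpace ℂ H]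
    (f : ℕ → H) : Prop :=
  ∃ A B : ℝ, 0 < A ∧ 0 < B ∧ ∀ x : H,
    A * ‖x‖ ^ 2 ≤ ∑' n, ‖⟪x, f n⟫_ℂ‖ ^ 2 ∧ ∑' n, ‖⟪x, f n⟫_ℂ‖ ^ 2 ≤ B * ‖x‖ ^ 2

/-- `U` is the analysis operator of the sequence `f`. -/
def IsAnalysisOp {H : Type*} [NormedAddCommGroup H] [InnerProductSpace ℂ H]
    (f : ℕ → H) (U : H →L[ℂ] ell2) : Prop :=
  ∀ (x : H) (n : ℕ), (U x : ∀ _ : ℕ, ℂ) n = ⟪x, f n⟫_ℂ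

/-!
If `V† ∘ U = id`, then `U V†` is an idempotent with range `range U` and kernel `ker V†`, so
`ker V†` is an algebraic complement of `range U`. Having a left inverse, `U` has closed range, so
its orthogonal complement `ker U†` is another complement of `range U`. Any two complements of the
same subspace are isomorphic to the quotient by it, hence have the same dimension.
-/

open ContinuousLinearMap

theorem LinearMap.isCompl_range_ker_of_comp_eq_id {R M N : Type*} [Ring R]
    [AddCommGroup M] [Module R M] [AddCommGroup N] [Module R N]
    {f : M →ₗ[R] N} {g : N →ₗ[R] M} (h : g ∘ₗ f = LinearMap.id) :
    IsCompl (LinearMap.range f) (LinearMap.ker g) := by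
  have hidem : IsIdempotentElem (f ∘ₗ g) :=
    LinearMap.ext fun x => congr_arg f (LinearMap.congr_fun h (g x))
  have hg : LinearMap.range g = ⊤ :=
    LinearMap.range_eq_top.mpr (Function.LeftInverse.surjective (LinearMap.congr_fun h))
  have hf : LinearMap.ker f = ⊥ :=
    LinearMap.ker_eq_bot.mpr (Function.LeftInverse.injective (LinearMap.congr_fun h))
  simpa [LinearMap.range_comp_of_range_eq_top f hg, LinearMap.ker_comp_of_ker_eq_bot g hf]
    using LinearMap.IsIdempotentElem.isCompl hidem

theorem Submodule.rank_eq_of_isCompl {R M : Type*} [Ring R] [AddCommGroup M] [Module R M]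
    {p q q' : Submodule R M} (hq : IsCompl p q) (hq' : IsCompl p q') :
    Module.rank R q = Module.rank R q' :=
  ((p.quotientEquivOfIsCompl q hq).symm.trans (p.quotientEquivOfIsCompl q' hq')).rank_eq

theorem ContinuousLinearMap.HasLeftInverse.isCompl_range_ker_adjoint {𝕜 E F : Type*} [RCLike 𝕜]
    [NormedAddCommGroup E] [InnerProductSpace 𝕜 E] [CompleteSpace E]
    [NormedAddCommGroup F] [InnerProductSpace 𝕜 F] [CompleteSpace F]
    {U : E →L[𝕜] F} (hU : U.HasLeftInverse) :
    IsCompl (LinearMap.range (U : E →ₗ[𝕜] F)) (LinearMap.ker (adjoint U : F →ₗ[𝕜] E)) := by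
  have : CompleteSpace (LinearMap.range (U : E →ₗ[𝕜] F)) := hU.isClosed_range.completeSpace_coe
  simpa [orthogonal_range] using (LinearMap.range (U : E →ₗ[𝕜] F)).isCompl_orthogonal

theorem dual_frames_same_excess_general
    {H : Type*} [NormedAddCommGroup H] [InnerProductSpace ℂ H] [CompleteSpace H]
    (U V : H →L[ℂ] ell2)
    (hdual : (ContinuousLinearMap.adjoint V) ∘L U = ContinuousLinearMap.id ℂ H) :
    Module.rank ℂ (LinearMap.ker (ContinuousLinearMap.adjoint U : ell2 →ₗ[ℂ] H)) =
      Module.rank ℂ (LinearMap.ker (ContinuousLinearMap.adjoint V : ell2 →ₗ[ℂ] H)) := by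
  have hU : U.HasLeftInverse := ⟨adjoint V, fun x => congr($hdual x)⟩
  exact Submodule.rank_eq_of_isCompl hU.isCompl_range_ker_adjoint
    (LinearMap.isCompl_range_ker_of_comp_eq_id congr(($hdual : H →ₗ[ℂ] H)))

/-- Dual frames have the same excess. -/
theorem dual_frames_same_excess
    {H : Type*} [NormedAddCommGroup H] [InnerProductSpace ℂ H] [CompleteSpace H]
    (f g : ℕ → H) (hf : IsFrame f) (hg : IsFrame g)
    (U V : H →L[ℂ] ell2) (hU : IsAnalysisOp f U) (hV : IsAnalysisOp g V)
    (hdual : (ContinuousLinearMap.adjoint V) ∘L U = ContinuousLinearMap.id ℂ H) :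
    Module.rank ℂ (LinearMap.ker (ContinuousLinearMap.adjoint U : ell2 →ₗ[ℂ] H)) =
      Module.rank ℂ (LinearMap.ker (ContinuousLinearMap.adjoint V : ell2 →ₗ[ℂ] H)) :=
  dual_frames_same_excess_general U V hdual
end
end

section
/- Let (f_n) be a frame in H with analysis operator U. A bounded operator V : H → ℓ² satisfies V*U = I if and only if V* = (U*U)^{-1} U* F for some bounded idempotent F on ℓ² with range Im U. -/
open scoped InnerProductSpace

noncomputable section

/-!
A left inverse `W` of `U` makes `U W` an idempotent with range `Im U`; conversely an idempotent
`F` with range `Im U` fixes `Im U`, so `T F U = T U = I` for any left inverse `T` of `U`. Hence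
the left inverses of `U` are exactly the maps `T F`, where `T` is one fixed left inverse and `F`
runs over the idempotents onto `Im U`; here `T = (U*U)⁻¹ U*`.
-/

namespace ContinuousLinearMap

variable {S : Type*} [Semiring S] {E F : Type*} [TopologicalSpace E] [AddCommMonoid E] [Module S E]
  [TopologicalSpace F] [AddCommMonoid F] [Module S F]

theorem comp_comp_self_of_comp_eq_id {U : E →L[S] F} {W : F →L[S] E} (hWU : W ∘L U = .id S E) :
    (U ∘L W) ∘L (U ∘L W) = U ∘L W := by
  rw [comp_assoc, ← comp_assoc W, hWU, id_comp]

theorem range_comp_of_comp_eq_id {U : E →L[S] F} {W : F →L[S] E} (hWU : W ∘L U = .id S E) :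
    LinearMap.range ((U ∘L W : F →L[S] F) : F →ₗ[S] F) = LinearMap.range (U : E →ₗ[S] F) := by
  have hW : LinearMap.range (W : F →ₗ[S] E) = ⊤ :=
    LinearMap.range_eq_top.mpr fun x => ⟨U x, congr($hWU x)⟩
  exact LinearMap.range_comp_of_range_eq_top (U : E →ₗ[S] F) hW

theorem comp_eq_self_of_range_le {P : F →L[S] F} (hP : P ∘L P = P) {U : E →L[S] F}
    (hU : LinearMap.range (U : E →ₗ[S] F) ≤ LinearMap.range (P : F →ₗ[S] F)) : P ∘L U = U := by
  have hP' : IsIdempotentElem (P : F →ₗ[S] F) := congr(($hP : F →ₗ[S] F))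
  exact coe_injective
    ((LinearMap.IsIdempotentElem.comp_eq_right_iff hP' (U : E →ₗ[S] F)).mpr hU)

theorem comp_eq_id_iff_exists_idempotent {U : E →L[S] F} {T : F →L[S] E} (hTU : T ∘L U = .id S E)
    (W : F →L[S] E) :
    W ∘L U = .id S E ↔ ∃ P : F →L[S] F, P ∘L P = P ∧
      LinearMap.range (P : F →ₗ[S] F) = LinearMap.range (U : E →ₗ[S] F) ∧ W = T ∘L P := by
  constructor
  · intro hWU
    refine ⟨U ∘L W, comp_comp_self_of_comp_eq_id hWU, range_comp_of_comp_eq_id hWU, ?_⟩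
    rw [← comp_assoc, hTU, id_comp]
  · rintro ⟨P, hP, hrange, rfl⟩
    rw [comp_assoc, comp_eq_self_of_range_le hP hrange.ge, hTU]

end ContinuousLinearMap

theorem dual_iff_adjoint_eq_inv_comp_proj_general
    {H : Type*} [NormedAddCommGroup H] [InnerProductSpace ℂ H] [CompleteSpace H]
    (U : H →L[ℂ] ell2)
    (R : H →L[ℂ] H)
    (hR₁ : R ∘L ((ContinuousLinearMap.adjoint U) ∘L U) = ContinuousLinearMap.id ℂ H)
    (V : H →L[ℂ] ell2) :
    (ContinuousLinearMap.adjoint V) ∘L U = ContinuousLinearMap.id ℂ H ↔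
      ∃ F : ell2 →L[ℂ] ell2, F ∘L F = F ∧ LinearMap.range (F : ell2 →ₗ[ℂ] ell2) = LinearMap.range (U : H →ₗ[ℂ] ell2) ∧
        ContinuousLinearMap.adjoint V = (R ∘L ContinuousLinearMap.adjoint U) ∘L F := by
  have hleft : (R ∘L ContinuousLinearMap.adjoint U) ∘L U = ContinuousLinearMap.id ℂ H := by
    rwa [ContinuousLinearMap.comp_assoc]
  exact ContinuousLinearMap.comp_eq_id_iff_exists_idempotent hleft _

/-- General form of the synthesis operators of dual frames: `V* U = I` iff
`V* = (U*U)⁻¹ U* F` for some bounded oblique projection `F` onto `Im U`.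
Here `R` denotes the inverse of the frame operator `U*U`. -/
theorem dual_iff_adjoint_eq_inv_comp_proj
    {H : Type*} [NormedAddCommGroup H] [InnerProductSpace ℂ H] [CompleteSpace H]
    (f : ℕ → H) (hf : IsFrame f)
    (U : H →L[ℂ] ell2) (hU : IsAnalysisOp f U)
    (R : H →L[ℂ] H)
    (hR₁ : R ∘L ((ContinuousLinearMap.adjoint U) ∘L U) = ContinuousLinearMap.id ℂ H)
    (hR₂ : ((ContinuousLinearMap.adjoint U) ∘L U) ∘L R = ContinuousLinearMap.id ℂ H)
    (V : H →L[ℂ] ell2) :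
    (ContinuousLinearMap.adjoint V) ∘L U = ContinuousLinearMap.id ℂ H ↔
      ∃ F : ell2 →L[ℂ] ell2, F ∘L F = F ∧ LinearMap.range (F : ell2 →ₗ[ℂ] ell2) = LinearMap.range (U : H →ₗ[ℂ] ell2) ∧
        ContinuousLinearMap.adjoint V = (R ∘L ContinuousLinearMap.adjoint U) ∘L F :=
  dual_iff_adjoint_eq_inv_comp_proj_general U R hR₁ V
end
end

section
/- If (f_n) is a frame in H with analysis operator U, and T : H → K is a bounded surjection onto a Hilbert space K, then (T f_n) is a frame in K whose analysis operator is U T*, and the excess satisfies e(f_n) ≤ e(T f_n), i.e. dim(Ker U*) ≤ dim(Ker(T U*)). -/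
open scoped InnerProductSpace

noncomputable section

/-!
Since `⟪y, T f_n⟫ = ⟪T* y, f_n⟫`, the frame sums of `(T f_n)` at `y` are those of `(f_n)` at
`T* y`, and the analysis operator of `(T f_n)` is `U T*`. By the open mapping theorem a
surjection `T` has a bounded right inverse, which makes `T*` bounded below; together with
`‖T* y‖ ≤ ‖T‖ ‖y‖` this transports the frame bounds. Finally `Ker U* ⊆ Ker (T U*)`.
-/

open ContinuousLinearMap

section

variable {𝕜 E F : Type*} [RCLike 𝕜]
  [NormedAddCommGroup E] [InnerProductSpace 𝕜 E] [CompleteSpace E]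
  [NormedAddCommGroup F] [InnerProductSpace 𝕜 F] [CompleteSpace F]

theorem ContinuousLinearMap.exists_norm_le_mul_norm_adjoint_apply_of_surjective
    {T : E →L[𝕜] F} (hT : Function.Surjective T) :
    ∃ C > 0, ∀ y, ‖y‖ ≤ C * ‖adjoint T y‖ := by
  obtain ⟨C, hC, hpre⟩ := T.exists_preimage_norm_le hT
  refine ⟨C, hC, fun y => ?_⟩
  obtain ⟨x, rfl, hx⟩ := hpre y
  have hsq : ‖T x‖ ^ 2 ≤ ‖adjoint T (T x)‖ * (C * ‖T x‖) :=
    calc ‖T x‖ ^ 2 = RCLike.re ⟪adjoint T (T x), x⟫_𝕜 := by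
          rw [adjoint_inner_left, inner_self_eq_norm_sq]
      _ ≤ ‖adjoint T (T x)‖ * ‖x‖ := re_inner_le_norm _ _
      _ ≤ ‖adjoint T (T x)‖ * (C * ‖T x‖) := by gcongr
  rcases (norm_nonneg (T x)).eq_or_lt with h0 | hpos
  · rw [← h0]; positivity
  · nlinarith

end

section

variable {H K : Type*} [NormedAddCommGroup H] [InnerProductSpace ℂ H] [CompleteSpace H]
  [NormedAddCommGroup K] [InnerProductSpace ℂ K] [CompleteSpace K]

theorem IsFrame.map_of_surjective {f : ℕ → H} (hf : IsFrame f) {T : H →L[ℂ] K}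
    (hT : Function.Surjective T) : IsFrame (fun n => T (f n)) := by
  obtain ⟨A, B, hA, hB, hAB⟩ := hf
  obtain ⟨C, hC, hlow⟩ := exists_norm_le_mul_norm_adjoint_apply_of_surjective hT
  -- `‖T‖ + 1` rather than `‖T‖`, which vanishes when `K` is trivial
  refine ⟨A / C ^ 2, B * (‖T‖ + 1) ^ 2, by positivity, by positivity, fun y => ?_⟩
  simp only [← adjoint_inner_left]
  obtain ⟨hl, hr⟩ := hAB (adjoint T y)
  have hup : ‖adjoint T y‖ ≤ (‖T‖ + 1) * ‖y‖ :=
    calc ‖adjoint T y‖ ≤ ‖T‖ * ‖y‖ := by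
          simpa only [LinearIsometryEquiv.norm_map] using (adjoint T).le_opNorm y
      _ ≤ (‖T‖ + 1) * ‖y‖ := by gcongr; linarith
  constructor
  · calc A / C ^ 2 * ‖y‖ ^ 2 ≤ A / C ^ 2 * (C * ‖adjoint T y‖) ^ 2 := by
          gcongr; exact hlow y
      _ = A * ‖adjoint T y‖ ^ 2 := by field_simp
      _ ≤ _ := hl
  · calc _ ≤ B * ‖adjoint T y‖ ^ 2 := hr
      _ ≤ B * ((‖T‖ + 1) * ‖y‖) ^ 2 := by gcongr
      _ = B * (‖T‖ + 1) ^ 2 * ‖y‖ ^ 2 := by ring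

theorem IsAnalysisOp.comp_adjoint {f : ℕ → H} {U : H →L[ℂ] ell2} (hU : IsAnalysisOp f U)
    (T : H →L[ℂ] K) : IsAnalysisOp (fun n => T (f n)) (U ∘L adjoint T) := fun y n => by
  simpa only [comp_apply, adjoint_inner_left] using hU (adjoint T y) n

end

/-- Image of a frame under a bounded surjection is a frame with analysis
operator `U T*`, and the excess does not decrease. -/
theorem excess_le_of_surjection
    {H K : Type*} [NormedAddCommGroup H] [InnerProductSpace ℂ H] [CompleteSpace H]
    [NormedAddCommGroup K] [InnerProductSpace ℂ K] [CompleteSpace K]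
    (f : ℕ → H) (hf : IsFrame f)
    (U : H →L[ℂ] ell2) (hU : IsAnalysisOp f U)
    (T : H →L[ℂ] K) (hT : Function.Surjective T) :
    IsFrame (fun n => T (f n)) ∧
      IsAnalysisOp (fun n => T (f n)) (U ∘L ContinuousLinearMap.adjoint T) ∧
      Module.rank ℂ (LinearMap.ker (ContinuousLinearMap.adjoint U : ell2 →ₗ[ℂ] H)) ≤
        Module.rank ℂ (LinearMap.ker ((T ∘L ContinuousLinearMap.adjoint U : ell2 →L[ℂ] K) : ell2 →ₗ[ℂ] K)) :=
  ⟨hf.map_of_surjective hT, hU.comp_adjoint T,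
    Submodule.rank_mono (LinearMap.ker_le_ker_comp _ _)⟩
end
end

section
/- Equivalent frames have the same excess: if (f_n) is a frame in H, T : H → K a bounded invertible operator, and g_n = T f_n, then dim(Ker U*) = dim(Ker V*) where U, V are the analysis operators of (f_n), (g_n). -/
open scoped InnerProductSpace

noncomputable section

namespace IsAnalysisOp

variable {H K : Type*} [NormedAddCommGroup H] [InnerProductSpace ℂ H]
  [NormedAddCommGroup K] [InnerProductSpace ℂ K]

theorem unique {f : ℕ → H} {U V : H →L[ℂ] ell2} (hU : IsAnalysisOp f U)
    (hV : IsAnalysisOp f V) : U = V := by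
  ext x n
  rw [hU x n, hV x n]

theorem comp_adjoint_s12 [CompleteSpace H] [CompleteSpace K] {f : ℕ → H} {U : H →L[ℂ] ell2}
    (hU : IsAnalysisOp f U) (T : H →L[ℂ] K) :
    IsAnalysisOp (fun n => T (f n)) (U ∘L ContinuousLinearMap.adjoint T) := by
  intro x n
  rw [ContinuousLinearMap.comp_apply, hU, ContinuousLinearMap.adjoint_inner_left]

end IsAnalysisOp

theorem ker_adjoint_comp_adjoint_of_injective {H K E : Type*}
    [NormedAddCommGroup H] [InnerProductSpace ℂ H] [CompleteSpace H]
    [NormedAddCommGroup K] [InnerProductSpace ℂ K] [CompleteSpace K]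
    [NormedAddCommGroup E] [InnerProductSpace ℂ E] [CompleteSpace E]
    (U : H →L[ℂ] E) {T : H →L[ℂ] K} (hT : Function.Injective T) :
    LinearMap.ker (ContinuousLinearMap.adjoint (U ∘L ContinuousLinearMap.adjoint T) : E →ₗ[ℂ] K) =
      LinearMap.ker (ContinuousLinearMap.adjoint U : E →ₗ[ℂ] H) := by
  rw [ContinuousLinearMap.adjoint_comp, ContinuousLinearMap.adjoint_adjoint]
  exact LinearMap.ker_comp_of_ker_eq_bot _ (LinearMap.ker_eq_bot_of_injective hT)

theorem equivalent_frames_same_excess_general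
    {H K : Type*} [NormedAddCommGroup H] [InnerProductSpace ℂ H] [CompleteSpace H]
    [NormedAddCommGroup K] [InnerProductSpace ℂ K] [CompleteSpace K]
    (f : ℕ → H)
    (T : H ≃L[ℂ] K) (g : ℕ → K) (hg : ∀ n, g n = T (f n))
    (U : H →L[ℂ] ell2) (hU : IsAnalysisOp f U)
    (V : K →L[ℂ] ell2) (hV : IsAnalysisOp g V) :
    Module.rank ℂ (LinearMap.ker (ContinuousLinearMap.adjoint U : ell2 →ₗ[ℂ] H)) =
      Module.rank ℂ (LinearMap.ker (ContinuousLinearMap.adjoint V : ell2 →ₗ[ℂ] K)) := by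
  obtain rfl : g = fun n => T (f n) := funext hg
  rw [← (hU.comp_adjoint_s12 (T : H →L[ℂ] K)).unique hV,
    ker_adjoint_comp_adjoint_of_injective U T.injective]

/-- Equivalent frames have the same excess. -/
theorem equivalent_frames_same_excess
    {H K : Type*} [NormedAddCommGroup H] [InnerProductSpace ℂ H] [CompleteSpace H]
    [NormedAddCommGroup K] [InnerProductSpace ℂ K] [CompleteSpace K]
    (f : ℕ → H) (hf : IsFrame f)
    (T : H ≃L[ℂ] K) (g : ℕ → K) (hg : ∀ n, g n = T (f n))
    (U : H →L[ℂ] ell2) (hU : IsAnalysisOp f U)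
    (V : K →L[ℂ] ell2) (hV : IsAnalysisOp g V) :
    Module.rank ℂ (LinearMap.ker (ContinuousLinearMap.adjoint U : ell2 →ₗ[ℂ] H)) =
      Module.rank ℂ (LinearMap.ker (ContinuousLinearMap.adjoint V : ell2 →ₗ[ℂ] K)) :=
  equivalent_frames_same_excess_general f T g hg U hU V hV
end
end

section
/- Approximately dual frames have the same excess: if (f_n) and (g_n) are frames in H with analysis operators U, V satisfying ‖V*U − I‖ < 1, then dim(Ker U*) = dim(Ker V*). -/
open scoped InnerProductSpace

noncomputable section

/-! By the Neumann series, `‖V*U - 1‖ < 1` makes `V*U` invertible. Then `(V*U)⁻¹V*` is a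
continuous left inverse of `U`, so `ran U` is closed, and every `y` splits as
`U (V*U)⁻¹ V* y + (y - U (V*U)⁻¹ V* y)` with the second summand in `ker V*`; thus `ker V*` is an
algebraic complement of `ran U`. Since `ran U` is closed, `ker U* = (ran U)ᗮ` is another one.
Two complements of the same subspace are isomorphic to the quotient by it, so they have the same
dimension. -/

theorem LinearMap.isCompl_range_ker_of_bijective_comp {R M N : Type*} [Ring R]
    [AddCommGroup M] [Module R M] [AddCommGroup N] [Module R N]
    {U : M →ₗ[R] N} {W : N →ₗ[R] M} (h : Function.Bijective (W ∘ₗ U)) :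
    IsCompl (LinearMap.range U) (LinearMap.ker W) := by
  constructor
  · rw [Submodule.disjoint_def]
    rintro _ ⟨x, rfl⟩ hx
    rw [h.1 (show (W ∘ₗ U) x = (W ∘ₗ U) 0 by simpa using hx), map_zero]
  · rw [codisjoint_iff_le_sup]
    intro y _
    obtain ⟨x, hx⟩ := h.2 (W y)
    refine Submodule.mem_sup.2 ⟨U x, ⟨x, rfl⟩, y - U x, ?_, add_sub_cancel _ _⟩
    rw [LinearMap.mem_ker, map_sub, ← hx, LinearMap.comp_apply, sub_self]

theorem ContinuousLinearMap.hasLeftInverse_of_isUnit_comp {R E F : Type*} [Semiring R]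
    [TopologicalSpace E] [AddCommMonoid E] [Module R E]
    [TopologicalSpace F] [AddCommMonoid F] [Module R F]
    {U : E →L[R] F} {W : F →L[R] E} (h : IsUnit (W ∘L U)) : U.HasLeftInverse := by
  obtain ⟨u, hu⟩ := h
  refine ⟨(↑u⁻¹ : E →L[R] E) ∘L W, fun x => ?_⟩
  have := congr($(u.inv_mul) x)
  rwa [hu] at this

theorem IsCompl.rank_eq {R M : Type*} [Ring R] [AddCommGroup M] [Module R M]
    {p q r : Submodule R M} (hq : IsCompl p q) (hr : IsCompl p r) :
    Module.rank R q = Module.rank R r := by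
  rw [← (p.quotientEquivOfIsCompl q hq).rank_eq, (p.quotientEquivOfIsCompl r hr).rank_eq]

theorem isUnit_of_norm_sub_one_lt_one {R : Type*} [NormedRing R] [HasSummableGeomSeries R] {x : R}
    (h : ‖x - 1‖ < 1) : IsUnit x := by
  simpa using isUnit_one_sub_of_norm_lt_one (x := 1 - x) (by rwa [norm_sub_rev])

theorem ContinuousLinearMap.rank_ker_adjoint_eq_of_isUnit_adjoint_comp {𝕜 E F : Type*} [RCLike 𝕜]
    [NormedAddCommGroup E] [InnerProductSpace 𝕜 E] [CompleteSpace E]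
    [NormedAddCommGroup F] [InnerProductSpace 𝕜 F] [CompleteSpace F]
    {U V : E →L[𝕜] F} (h : IsUnit (adjoint V ∘L U)) :
    Module.rank 𝕜 (adjoint U).ker = Module.rank 𝕜 (adjoint V).ker := by
  have hclosed : IsClosed (U.range : Set F) := by
    rw [LinearMap.coe_range]
    exact (hasLeftInverse_of_isUnit_comp h).isClosed_range
  have : CompleteSpace U.range := hclosed.completeSpace_coe
  have hcomplU : IsCompl U.range (adjoint U).ker :=
    U.orthogonal_range ▸ U.range.isCompl_orthogonal
  have hcomplV : IsCompl U.range (adjoint V).ker :=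
    LinearMap.isCompl_range_ker_of_bijective_comp
      (ContinuousLinearEquiv.unitsEquiv 𝕜 E h.unit).bijective
  exact hcomplU.rank_eq hcomplV

theorem approx_dual_frames_same_excess_general
    {H : Type*} [NormedAddCommGroup H] [InnerProductSpace ℂ H] [CompleteSpace H]
    (U V : H →L[ℂ] ell2)
    (had : ‖(ContinuousLinearMap.adjoint V) ∘L U - ContinuousLinearMap.id ℂ H‖ < 1) :
    Module.rank ℂ (LinearMap.ker (ContinuousLinearMap.adjoint U : ell2 →ₗ[ℂ] H)) =
      Module.rank ℂ (LinearMap.ker (ContinuousLinearMap.adjoint V : ell2 →ₗ[ℂ] H)) :=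
  ContinuousLinearMap.rank_ker_adjoint_eq_of_isUnit_adjoint_comp (isUnit_of_norm_sub_one_lt_one had)

/-- Approximately dual frames have the same excess. -/
theorem approx_dual_frames_same_excess
    {H : Type*} [NormedAddCommGroup H] [InnerProductSpace ℂ H] [CompleteSpace H]
    (f g : ℕ → H) (hf : IsFrame f) (hg : IsFrame g)
    (U V : H →L[ℂ] ell2) (hU : IsAnalysisOp f U) (hV : IsAnalysisOp g V)
    (had : ‖(ContinuousLinearMap.adjoint V) ∘L U - ContinuousLinearMap.id ℂ H‖ < 1) :
    Module.rank ℂ (LinearMap.ker (ContinuousLinearMap.adjoint U : ell2 →ₗ[ℂ] H)) =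
      Module.rank ℂ (LinearMap.ker (ContinuousLinearMap.adjoint V : ell2 →ₗ[ℂ] H)) :=
  approx_dual_frames_same_excess_general U V had
end
end

section
/- If a frame (f_n) with analysis operator U possesses a Parseval dual (a dual frame (g_n) whose analysis operator V is an isometry, V*V = I), then the optimal lower frame bound satisfies A ≥ 1, equivalently (U*U)^{-1} ≤ I as positive operators. -/
open scoped InnerProductSpace

noncomputable section

/-- If a frame possesses a Parseval dual then its optimal lower frame bound is
at least 1, i.e. `U*U ≥ I`, equivalently `‖x‖ ≤ ‖U x‖` for all `x`. -/
theorem lower_bound_ge_one_of_parseval_dual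
    {H : Type*} [NormedAddCommGroup H] [InnerProductSpace ℂ H] [CompleteSpace H]
    (f : ℕ → H) (hf : IsFrame f)
    (U : H →L[ℂ] ell2) (hU : IsAnalysisOp f U)
    (g : ℕ → H) (V : H →L[ℂ] ell2) (hV : IsAnalysisOp g V)
    (hdual : (ContinuousLinearMap.adjoint V) ∘L U = ContinuousLinearMap.id ℂ H)
    (hParseval : (ContinuousLinearMap.adjoint V) ∘L V = ContinuousLinearMap.id ℂ H) :
    ∀ x : H, ‖x‖ ^ 2 ≤ ‖U x‖ ^ 2 := by
  intro x
  have hiso : ∀ y : H, ‖V y‖ = ‖y‖ := by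
    intro y
    have h : (ContinuousLinearMap.adjoint V) (V y) = y := by
      have := congrArg (fun T => T y) hParseval
      simpa using this
    have hinner : ⟪V y, V y⟫_ℂ = ⟪y, y⟫_ℂ := by
      rw [← ContinuousLinearMap.adjoint_inner_left, h]
    rw [inner_self_eq_norm_sq_to_K, inner_self_eq_norm_sq_to_K] at hinner
    have h2 : ‖V y‖ ^ 2 = ‖y‖ ^ 2 := by exact_mod_cast hinner
    nlinarith [norm_nonneg (V y), norm_nonneg y]
  have hVnorm : ‖ContinuousLinearMap.adjoint V‖ ≤ 1 := by
    rw [ContinuousLinearMap.adjoint.norm_map V]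
    exact ContinuousLinearMap.opNorm_le_bound V zero_le_one
      (fun y => by rw [hiso y, one_mul])
  have hx : (ContinuousLinearMap.adjoint V) (U x) = x := by
    have := congrArg (fun T => T x) hdual
    simpa using this
  have hle : ‖x‖ ≤ ‖U x‖ := by
    calc ‖x‖ = ‖(ContinuousLinearMap.adjoint V) (U x)‖ := by rw [hx]
      _ ≤ ‖ContinuousLinearMap.adjoint V‖ * ‖U x‖ := (ContinuousLinearMap.adjoint V).le_opNorm _
      _ ≤ 1 * ‖U x‖ := by
          exact mul_le_mul_of_nonneg_right hVnorm (norm_nonneg _)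
      _ = ‖U x‖ := one_mul _
  exact pow_le_pow_left₀ (norm_nonneg x) hle 2
end
end

section
/- Let (f_n) be a frame with analysis operator U such that U*U ≥ I (lower frame bound A ≥ 1) and dim(Im(U*U − I)) ≤ dim(Ker U*). Then there exists an isometry V : H → ℓ² with V*U = I; i.e. (f_n) possesses a Parseval dual frame. -/
/-!
Write `S = U*U`. Since `S ≥ 1`, `S` is invertible with `S⁻¹ ≤ 1`, and any `J : H → ℓ²` with
`U* J = 0` and `J* J = 1 - S⁻¹` gives the Parseval dual `V = U S⁻¹ + J`: indeed
`V* V = S⁻¹ S S⁻¹ + J* J = 1` and `V* U = S⁻¹ S = 1`. Take `J = W √(1 - S⁻¹)`, where `√(1 - S⁻¹)`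
maps into `Ker(S - 1)ᗮ = closure Im(S - 1)` and `W` is an isometry of that space into `Ker U*`.
`W` exists by comparing Hilbert dimensions: `H` is separable (`U` embeds it into `ℓ²`), so
`closure Im(S - 1)` has countable Hilbert dimension, and it is finite-dimensional (hence equal to
`Im(S - 1)`) when `Ker U*` is.
-/

open scoped InnerProductSpace

universe u

noncomputable section

theorem HilbertBasis.separableSpace {ι 𝕜 E : Type*} [RCLike 𝕜] [NormedAddCommGroup E]
    [InnerProductSpace 𝕜 E] [Countable ι] (b : HilbertBasis ι 𝕜 E) :
    TopologicalSpace.SeparableSpace E := by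
  rw [← TopologicalSpace.isSeparable_univ_iff, ← Submodule.top_coe (R := 𝕜), ← b.dense_span,
    Submodule.topologicalClosure_coe]
  exact (Set.countable_range b).isSeparable.span.closure

theorem Orthonormal.countable {ι 𝕜 E : Type*} [RCLike 𝕜] [NormedAddCommGroup E]
    [InnerProductSpace 𝕜 E] [TopologicalSpace.SeparableSpace E] {v : ι → E}
    (hv : Orthonormal 𝕜 v) : Countable ι := by
  refine Pairwise.countable_of_isOpen_disjoint (s := fun i => Metric.ball (v i) 2⁻¹)
    (fun i j hij => Metric.ball_disjoint_ball ?_) (fun _ => Metric.isOpen_ball)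
    (fun _ => Metric.nonempty_ball.mpr (by norm_num))
  have h : dist (v i) (v j) ^ 2 = 2 := by
    rw [dist_eq_norm, @norm_sub_sq 𝕜, hv.1 i, hv.1 j, hv.2 hij]
    norm_num
  nlinarith [dist_nonneg (x := v i) (y := v j)]

theorem ContinuousLinearMap.separableSpace_of_norm_le {𝕜 E F : Type*} [NontriviallyNormedField 𝕜]
    [NormedAddCommGroup E] [NormedSpace 𝕜 E] [NormedAddCommGroup F] [NormedSpace 𝕜 F]
    [TopologicalSpace.SeparableSpace F] (U : E →L[𝕜] F) (h : ∀ x, ‖x‖ ≤ ‖U x‖) :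
    TopologicalSpace.SeparableSpace E := by
  have : SecondCountableTopology F := UniformSpace.secondCountable_of_separable F
  refine ((U.antilipschitz_of_bound (K := 1) ?_).isUniformEmbedding
    U.uniformContinuous).isEmbedding.separableSpace
  simpa using h

section HilbertDimension

variable {𝕜 : Type*} [RCLike 𝕜] {E : Type u} {F : Type*} [NormedAddCommGroup E]
  [InnerProductSpace 𝕜 E] [NormedAddCommGroup F] [InnerProductSpace 𝕜 F]
  [TopologicalSpace.SeparableSpace E] {R K : Submodule 𝕜 E} {N : Submodule 𝕜 F}

theorem HilbertBasis.nonempty_embedding_of_rank_le (hRK : R.topologicalClosure = K)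
    (hdim : Cardinal.lift (Module.rank 𝕜 R) ≤ Cardinal.lift.{u} (Module.rank 𝕜 N))
    {ι κ : Type*} (b₁ : HilbertBasis ι 𝕜 K) (b₂ : HilbertBasis κ 𝕜 N) :
    Nonempty (ι ↪ κ) := by
  cases finite_or_infinite κ with
  | inr _ =>
    have : SecondCountableTopology E := UniformSpace.secondCountable_of_separable E
    have := b₁.orthonormal.countable
    obtain ⟨e⟩ := nonempty_embedding_nat ι
    exact ⟨e.trans (Infinite.natEmbedding κ)⟩
  | inl _ =>
    have := Fintype.ofFinite κ
    let c₂ := b₂.toOrthonormalBasis.toBasis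
    have : FiniteDimensional 𝕜 N := c₂.finiteDimensional_of_finite
    have : FiniteDimensional 𝕜 R := by
      refine Module.rank_lt_aleph0_iff.mp (Cardinal.lift_lt_aleph0.mp (hdim.trans_lt ?_))
      exact Cardinal.lift_lt_aleph0.mpr (Module.rank_lt_aleph0 𝕜 N)
    obtain rfl : R = K := by
      rw [← hRK, (Submodule.closed_of_finiteDimensional R).submodule_topologicalClosure_eq]
    have := b₁.orthonormal.linearIndependent.finite
    have := Fintype.ofFinite ι
    refine Function.Embedding.nonempty_of_card_le ?_
    calc Fintype.card ι ≤ Module.finrank 𝕜 R :=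
          b₁.orthonormal.linearIndependent.fintype_card_le_finrank
      _ ≤ Module.finrank 𝕜 N :=
          Module.finrank_le_finrank_of_rank_le_rank hdim (Module.rank_lt_aleph0 𝕜 N)
      _ = Fintype.card κ := Module.finrank_eq_card_basis c₂

theorem Submodule.nonempty_linearIsometry_of_rank_le [CompleteSpace K] [CompleteSpace N]
    (hRK : R.topologicalClosure = K)
    (hdim : Cardinal.lift (Module.rank 𝕜 R) ≤ Cardinal.lift.{u} (Module.rank 𝕜 N)) :
    Nonempty (K →ₗᵢ[𝕜] N) := by
  obtain ⟨_, b₁, -⟩ := exists_hilbertBasis 𝕜 K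
  obtain ⟨_, b₂, -⟩ := exists_hilbertBasis 𝕜 N
  obtain ⟨e⟩ := b₁.nonempty_embedding_of_rank_le hRK hdim b₂
  exact ⟨(b₂.orthonormal.comp e e.injective).orthogonalFamily.linearIsometry.comp
    b₁.repr.toLinearIsometry⟩

end HilbertDimension

namespace ContinuousLinearMap

section RCLike

variable {𝕜 E F : Type*} [RCLike 𝕜] [NormedAddCommGroup E] [InnerProductSpace 𝕜 E]
  [NormedAddCommGroup F] [InnerProductSpace 𝕜 F] [CompleteSpace E] [CompleteSpace F]

theorem one_le_adjoint_comp_self {U : E →L[𝕜] F} (h : ∀ x, ‖x‖ ^ 2 ≤ ‖U x‖ ^ 2) :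
    1 ≤ adjoint U ∘L U := by
  refine ⟨((isPositive_adjoint_comp_self U).isSelfAdjoint.sub (.one _)).isSymmetric, fun x => ?_⟩
  rw [reApplyInnerSelf_apply, sub_apply, one_apply_eq_self, inner_sub_left, comp_apply,
    adjoint_inner_left, map_sub, inner_self_eq_norm_sq, inner_self_eq_norm_sq, sub_nonneg]
  exact h x

theorem adjoint_comp_self_eq_id_and_adjoint_comp_eq_id {U J : E →L[𝕜] F} {P : E →L[𝕜] E}
    (hP : IsSelfAdjoint P) (hPU : P ∘L (adjoint U ∘L U) = .id 𝕜 E) (hUJ : adjoint U ∘L J = 0)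
    (hJ : adjoint J ∘L J = .id 𝕜 E - P) :
    adjoint (U ∘L P + J) ∘L (U ∘L P + J) = .id 𝕜 E ∧
      adjoint (U ∘L P + J) ∘L U = .id 𝕜 E := by
  have hJU : adjoint J ∘L U = 0 := by
    rw [← adjoint_adjoint U, ← adjoint_comp, hUJ, map_zero]
  have hV : adjoint (U ∘L P + J) = P ∘L adjoint U + adjoint J := by
    rw [map_add, adjoint_comp, hP.adjoint_eq]
  constructor
  · rw [hV, add_comp, comp_add, comp_add, ← comp_assoc, comp_assoc P, hPU, comp_assoc, hUJ,
      comp_zero, ← comp_assoc (adjoint J) U P, hJU, zero_comp, hJ, id_comp, add_zero, zero_add,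
      add_sub_cancel]
  · rw [hV, add_comp, comp_assoc, hPU, hJU, add_zero]

end RCLike

variable {E F : Type*} [NormedAddCommGroup E] [InnerProductSpace ℂ E]
  [NormedAddCommGroup F] [InnerProductSpace ℂ F] [CompleteSpace E] [CompleteSpace F]

theorem orthogonal_ker_one_sub_inv {s : (E →L[ℂ] E)ˣ} (hs : IsSelfAdjoint (s : E →L[ℂ] E)) :
    (LinearMap.ker ((1 - ↑s⁻¹ : E →L[ℂ] E) : E →ₗ[ℂ] E))ᗮ =
      (LinearMap.range ((↑s - 1 : E →L[ℂ] E) : E →ₗ[ℂ] E)).topologicalClosure := by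
  have hfac : (1 - ↑s⁻¹ : E →L[ℂ] E) = ↑s⁻¹ * (↑s - 1) := by
    rw [mul_sub, Units.inv_mul, mul_one]
  have hker : LinearMap.ker ((1 - ↑s⁻¹ : E →L[ℂ] E) : E →ₗ[ℂ] E) =
      LinearMap.ker ((↑s - 1 : E →L[ℂ] E) : E →ₗ[ℂ] E) := by
    rw [hfac, mul_def, toLinearMap_comp, LinearMap.ker_comp_of_ker_eq_bot]
    refine LinearMap.ker_eq_bot_of_injective
      (Function.LeftInverse.injective (g := ⇑(s : E →L[ℂ] E)) fun x => ?_)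
    change ((s : E →L[ℂ] E) * ↑s⁻¹) x = x
    rw [Units.mul_inv, one_apply_eq_self]
  rw [hker, orthogonal_ker, (hs.sub (.one _)).adjoint_eq]

theorem exists_adjoint_comp_self_eq {A : E →L[ℂ] E} (hA : 0 ≤ A) {N : Submodule ℂ F}
    (W : (LinearMap.ker (A : E →ₗ[ℂ] E))ᗮ →ₗᵢ[ℂ] N) :
    ∃ J : E →L[ℂ] F, adjoint J ∘L J = A ∧ ∀ x, J x ∈ N := by
  set G := CFC.sqrt A
  have hG : G.IsPositive := (nonneg_iff_isPositive G).mp (CFC.sqrt_nonneg A)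
  have hGG : ∀ x, G (G x) = A x := fun x => by
    rw [← mul_apply_eq_comp, CFC.sqrt_mul_sqrt_self A hA]
  have hGK : ∀ x, G x ∈ (LinearMap.ker (A : E →ₗ[ℂ] E))ᗮ := by
    intro x
    rw [Submodule.mem_orthogonal]
    intro y (hy : A y = 0)
    have hGy : G y = 0 := by
      rw [← inner_self_eq_zero (𝕜 := ℂ), hG.inner_left_eq_inner_right, hGG, hy, inner_zero_right]
    rw [← hG.inner_left_eq_inner_right, hGy, inner_zero_left]
  refine ⟨N.subtypeL ∘L W.toContinuousLinearMap ∘L G.codRestrict _ hGK, ?_, fun x => (W _).2⟩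
  ext x : 1
  refine ext_inner_right ℂ fun y => ?_
  simp only [comp_apply, adjoint_inner_left, Submodule.subtypeL_apply,
    LinearIsometry.coe_toContinuousLinearMap]
  rw [← Submodule.coe_inner, W.inner_map_map, Submodule.coe_inner, coe_codRestrict_apply,
    coe_codRestrict_apply, ← hG.inner_left_eq_inner_right, hGG]

end ContinuousLinearMap

theorem exists_parseval_dual_general
    {H : Type u} [NormedAddCommGroup H] [InnerProductSpace ℂ H] [CompleteSpace H]
    (U : H →L[ℂ] ell2)
    (hA : ∀ x : H, ‖x‖ ^ 2 ≤ ‖U x‖ ^ 2)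
    (hdim : Cardinal.lift.{0} (Module.rank ℂ (LinearMap.range
        ((ContinuousLinearMap.adjoint U) ∘L U - ContinuousLinearMap.id ℂ H : H →ₗ[ℂ] H))) ≤
      Cardinal.lift.{u} (Module.rank ℂ (LinearMap.ker (ContinuousLinearMap.adjoint U : ell2 →ₗ[ℂ] H)))) :
    ∃ V : H →L[ℂ] ell2,
      (ContinuousLinearMap.adjoint V) ∘L V = ContinuousLinearMap.id ℂ H ∧
      (ContinuousLinearMap.adjoint V) ∘L U = ContinuousLinearMap.id ℂ H := by
  have hS := ContinuousLinearMap.one_le_adjoint_comp_self hA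
  obtain ⟨s, hs⟩ := CStarAlgebra.isUnit_of_le 1 hS
  have hs_nonneg : 0 ≤ (s : H →L[ℂ] H) := hs ▸ zero_le_one.trans hS
  have : TopologicalSpace.SeparableSpace ell2 := (default : HilbertBasis ℕ ℂ ell2).separableSpace
  have : TopologicalSpace.SeparableSpace H := U.separableSpace_of_norm_le fun x =>
    (pow_le_pow_iff_left₀ (norm_nonneg _) (norm_nonneg _) two_ne_zero).mp (hA x)
  obtain ⟨W⟩ := Submodule.nonempty_linearIsometry_of_rank_le
    (ContinuousLinearMap.orthogonal_ker_one_sub_inv hs_nonneg.isSelfAdjoint).symm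
    (hs ▸ hdim)
  obtain ⟨J, hJ, hJN⟩ := ContinuousLinearMap.exists_adjoint_comp_self_eq
    (sub_nonneg.mpr (CStarAlgebra.inv_le_one (Units.val_le_val.mp (by rwa [Units.val_one, hs]))))
    W
  refine ⟨U ∘L ↑s⁻¹ + J, ContinuousLinearMap.adjoint_comp_self_eq_id_and_adjoint_comp_eq_id
    (IsSelfAdjoint.of_nonneg (CFC.inv_nonneg_of_nonneg s hs_nonneg)) ?_ ?_ hJ⟩
  · rw [← hs]
    exact s.inv_mul
  · ext x : 1
    exact hJN x

/-- If `U*U ≥ I` and `dim Im(U*U - I) ≤` the excess, then the frame possesses a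
Parseval dual, i.e. there is an isometry `V` with `V* U = I`. -/
theorem exists_parseval_dual
    {H : Type u} [NormedAddCommGroup H] [InnerProductSpace ℂ H] [CompleteSpace H]
    (f : ℕ → H) (hf : IsFrame f)
    (U : H →L[ℂ] ell2) (hU : IsAnalysisOp f U)
    (hA : ∀ x : H, ‖x‖ ^ 2 ≤ ‖U x‖ ^ 2)
    (hdim : Cardinal.lift.{0} (Module.rank ℂ (LinearMap.range
        ((ContinuousLinearMap.adjoint U) ∘L U - ContinuousLinearMap.id ℂ H : H →ₗ[ℂ] H))) ≤
      Cardinal.lift.{u} (Module.rank ℂ (LinearMap.ker (ContinuousLinearMap.adjoint U : ell2 →ₗ[ℂ] H)))) :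
    ∃ V : H →L[ℂ] ell2,
      (ContinuousLinearMap.adjoint V) ∘L V = ContinuousLinearMap.id ℂ H ∧
      (ContinuousLinearMap.adjoint V) ∘L U = ContinuousLinearMap.id ℂ H :=
  exists_parseval_dual_general U hA hdim
end
end
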